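/- arXiv:2602.19960 — 2 statements merged into one kernel-verified Lean document; each statement's English description precedes it below -/
import Mathlib

section
/- The class R ⊆ 2^ω of m-rigid sets has full fair-coin measure: μ(R) = 1. Equivalently, the set of A ∈ 2^ω that are not m-rigid is a μ-null set. -/
open MeasureTheory

/-- The cylinder of binary sequences extending the finite string `σ`. -/
def cylinder (σ : List Bool) : Set (ℕ → Bool) :=
  {X | ∀ i, i < σ.length → X i = σ.getD i false}

/-- `μ` is the fair-coin product measure on Cantor space:
each cylinder `[σ]` has measure `2^{-|σ|}`. -/
def IsFairCoin (μ : Measure (ℕ → Bool)) : Prop :=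
  ∀ σ : List Bool, μ (cylinder σ) = (1 / 2 : ENNReal) ^ σ.length

/-- `A ∈ 2^ω` is m-rigid: every total computable `k` with
`∀ x, A x = A (k x)` (an m-autoreduction) is eventually the identity. -/
def MRigid (A : ℕ → Bool) : Prop :=
  ∀ k : ℕ → ℕ, Computable k → (∀ x, A x = A (k x)) → {x | k x ≠ x}.Finite


/-!
A non-m-rigid set is a fixed point of `A ↦ A ∘ k` for one of the countably many computable `k`
moving infinitely many points, so it suffices that each such fixed-point class is null. Given
`k`, pick `n` points `x` moved by `k` such that `k x`, whenever it is one of the chosen points,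
is a smaller one. On a fixed point `A` the bit `A x` is then determined by bits outside the chosen
points, so the prefixes of length `N` (beyond all `x` and `k x`) of fixed points number at most
`2 ^ (N - n)`, and the fixed-point class has measure at most `2 ^ (-n)`.
-/

open Finset

def prefixes (N : ℕ) (S : Set (ℕ → Bool)) : Set (Fin N → Bool) :=
  (fun A i => A i) '' S

theorem mem_cylinder_ofFn {N : ℕ} (v : Fin N → Bool) (A : ℕ → Bool) :
    A ∈ cylinder (List.ofFn v) ↔ ∀ i : Fin N, A i = v i := by
  simp only [_root_.cylinder, Set.mem_ofPred_eq, List.length_ofFn]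
  refine ⟨fun h i => ?_, fun h i hi => ?_⟩
  · simpa using h i i.isLt
  · simpa [hi] using h ⟨i, hi⟩

namespace IsFairCoin

variable {μ : Measure (ℕ → Bool)}

theorem measure_univ (hμ : IsFairCoin μ) : μ Set.univ = 1 := by
  have hnil : _root_.cylinder [] = Set.univ := by simp [_root_.cylinder]
  simpa [hnil] using hμ []

theorem measure_le_ncard_prefixes (hμ : IsFairCoin μ) (N : ℕ) (S : Set (ℕ → Bool)) :
    μ S ≤ (prefixes N S).ncard * (1 / 2) ^ N := by
  have hfin : (prefixes N S).Finite := Set.toFinite _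
  calc μ S ≤ μ (⋃ v ∈ hfin.toFinset, cylinder (List.ofFn v)) := by
        refine measure_mono fun A hA => Set.mem_biUnion ?_ ((mem_cylinder_ofFn _ A).2 fun _ => rfl)
        exact hfin.mem_toFinset.2 ⟨A, hA, rfl⟩
    _ ≤ ∑ v ∈ hfin.toFinset, μ (cylinder (List.ofFn v)) := measure_biUnion_finset_le _ _
    _ = (prefixes N S).ncard * (1 / 2) ^ N := by
        simp [hμ _, Set.ncard_eq_toFinset_card _ hfin]

end IsFairCoin

theorem ncard_le_two_pow_of_eqOn_compl {ι : Type*} [Fintype ι] {V : Set (ι → Bool)}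
    {t : Finset ι} (hV : ∀ v ∈ V, ∀ w ∈ V, Set.EqOn v w (↑t)ᶜ → v = w) :
    V.ncard ≤ 2 ^ (Fintype.card ι - #t) := by
  classical
  calc V.ncard ≤ (Set.univ : Set ({j // j ∉ t} → Bool)).ncard :=
        Set.ncard_le_ncard_of_injOn (fun v j => v j) (fun _ _ => Set.mem_univ _)
          fun v hv w hw hvw => hV v hv w hw fun j hj => congrFun hvw ⟨j, hj⟩
    _ = 2 ^ (Fintype.card ι - #t) := by
        rw [Set.ncard_univ, Nat.card_eq_fintype_card, Fintype.card_fun, Fintype.card_bool,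
          Fintype.card_subtype_compl, Fintype.card_coe]

theorem exists_finset_map_lt_of_infinite {k : ℕ → ℕ} (hk : {x | k x ≠ x}.Infinite) (n : ℕ) :
    ∃ s : Finset ℕ, #s = n ∧ ∀ x ∈ s, k x ≠ x ∧ (k x ∈ s → k x < x) := by
  induction n with
  | zero => exact ⟨∅, rfl, by simp⟩
  | succ n ih =>
    obtain ⟨s, hcard, hs⟩ := ih
    obtain ⟨x, hx, hbig⟩ := hk.exists_gt (s.sup fun y => max y (k y))
    have hbound : ∀ y ∈ s, y < x ∧ k y < x := fun y hy =>
      max_lt_iff.1 ((le_sup (f := fun y => max y (k y)) hy).trans_lt hbig)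
    have hxs : x ∉ s := fun h => (hbound x h).1.false
    refine ⟨insert x s, by rw [card_insert_of_notMem hxs, hcard], ?_⟩
    simp only [mem_insert, forall_eq_or_imp]
    refine ⟨⟨hx, fun hkx => (hbound _ (hkx.resolve_left hx)).1⟩, fun y hy => ⟨(hs y hy).1, ?_⟩⟩
    rintro (hkx | hkx)
    · exact absurd hkx (hbound y hy).2.ne
    · exact (hs y hy).2 hkx

theorem eqOn_of_map_lt {α : Type*} {k : ℕ → ℕ} {s : Finset ℕ} (hs : ∀ x ∈ s, k x ∈ s → k x < x)
    {A B : ℕ → α} (hA : ∀ x ∈ s, A x = A (k x)) (hB : ∀ x ∈ s, B x = B (k x))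
    (hAB : ∀ x ∈ s, k x ∉ s → A (k x) = B (k x)) : Set.EqOn A B s := by
  intro x
  induction x using Nat.strong_induction_on with
  | _ x ih =>
    intro hx
    rw [hA x hx, hB x hx]
    by_cases hkx : k x ∈ s
    · exact ih _ (hs x hx hkx) hkx
    · exact hAB x hx hkx

theorem two_pow_sub_mul_half_pow {n N : ℕ} (h : n ≤ N) :
    (2 : ENNReal) ^ (N - n) * (1 / 2) ^ N = (1 / 2) ^ n := by
  obtain ⟨m, rfl⟩ := Nat.exists_eq_add_of_le h
  rw [Nat.add_sub_cancel_left, pow_add (1 / 2 : ENNReal), mul_left_comm, ← mul_pow,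
    one_div, ENNReal.mul_inv_cancel two_ne_zero ENNReal.ofNat_ne_top, one_pow, mul_one]

theorem IsFairCoin.measure_fixedPoints_le {μ : Measure (ℕ → Bool)} (hμ : IsFairCoin μ)
    {k : ℕ → ℕ} (hk : {x | k x ≠ x}.Infinite) (n : ℕ) :
    μ {A | ∀ x, A x = A (k x)} ≤ (1 / 2) ^ n := by
  obtain ⟨s, hcard, hs⟩ := exists_finset_map_lt_of_infinite hk n
  set N := (s.sup fun y => max y (k y)) + 1
  have hbound : ∀ y ∈ s, y < N ∧ k y < N := fun y hy =>
    max_lt_iff.1 (Nat.lt_succ_of_le (le_sup (f := fun y => max y (k y)) hy))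
  have hnN : n ≤ N := hcard ▸ card_range N ▸
    card_le_card fun y hy => mem_range.2 (hbound y hy).1
  have hcount : (prefixes N {A | ∀ x, A x = A (k x)}).ncard ≤ 2 ^ (N - n) := by
    have := ncard_le_two_pow_of_eqOn_compl (t := s.attachFin fun y hy => (hbound y hy).1)
      (V := prefixes N {A | ∀ x, A x = A (k x)}) ?_
    · simpa [hcard] using this
    rintro _ ⟨A, hA, rfl⟩ _ ⟨B, hB, rfl⟩ hAB
    have hAB' : Set.EqOn A B s := eqOn_of_map_lt (fun x hx => (hs x hx).2)
      (fun x _ => hA x) (fun x _ => hB x) fun x hx hkx =>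
        hAB (x := ⟨k x, (hbound x hx).2⟩) (by simpa using hkx)
    funext i
    by_cases hi : (i : ℕ) ∈ s
    · exact hAB' hi
    · exact hAB (by simpa using hi)
  calc μ {A | ∀ x, A x = A (k x)}
      ≤ (prefixes N {A | ∀ x, A x = A (k x)}).ncard * (1 / 2) ^ N :=
        hμ.measure_le_ncard_prefixes N _
    _ ≤ 2 ^ (N - n) * (1 / 2) ^ N := by gcongr; exact_mod_cast hcount
    _ = (1 / 2) ^ n := two_pow_sub_mul_half_pow hnN

theorem IsFairCoin.measure_fixedPoints_eq_zero {μ : Measure (ℕ → Bool)} (hμ : IsFairCoin μ)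
    {k : ℕ → ℕ} (hk : {x | k x ≠ x}.Infinite) : μ {A | ∀ x, A x = A (k x)} = 0 := by
  by_contra hne
  obtain ⟨n, hn⟩ := ENNReal.exists_inv_two_pow_lt hne
  exact (hμ.measure_fixedPoints_le hk n).not_gt (by simpa using hn)

/-- The class of m-rigid sets has full fair-coin measure; equivalently, the
class of non-m-rigid sets is null. -/
theorem stmt_13 (μ : Measure (ℕ → Bool)) (hμ : IsFairCoin μ) :
    μ {A : ℕ → Bool | MRigid A} = 1 ∧ μ {A : ℕ → Bool | ¬ MRigid A} = 0 := by
  have hK : {k : ℕ → ℕ | Computable k ∧ {x | k x ≠ x}.Infinite}.Countable :=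
    (Set.countable_coe_iff.1 (inferInstanceAs (Countable {k : ℕ → ℕ // Computable k}))).mono
      fun _ hk => hk.1
  have hcover : {A : ℕ → Bool | ¬ MRigid A} ⊆
      ⋃ k ∈ {k : ℕ → ℕ | Computable k ∧ {x | k x ≠ x}.Infinite}, {A | ∀ x, A x = A (k x)} := by
    intro A hA
    simp only [Set.mem_ofPred_eq, MRigid, not_forall] at hA
    obtain ⟨k, hcomp, hauto, hinf⟩ := hA
    exact Set.mem_biUnion ⟨hcomp, hinf⟩ hauto
  have hnull : μ {A : ℕ → Bool | ¬ MRigid A} = 0 :=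
    measure_mono_null hcover <| (measure_biUnion_null_iff hK).2 fun _ hk =>
      hμ.measure_fixedPoints_eq_zero hk.2
  refine ⟨?_, hnull⟩
  rw [← hμ.measure_univ]
  exact measure_congr (ae_eq_univ.2 (by simpa [Set.compl_ofPred] using hnull))
end

section
/- Every Martin-Löf random set A ∈ 2^ω is m-rigid. -/
/-!
If an m-autoreduction `k` of `A` moves infinitely many points, pick moved points
`x₀ < x₁ < ⋯` greedily so that `xᵢ` exceeds `xⱼ` and `k xⱼ` for all `j < i`. The sets
`{X | ∀ i < n, X xᵢ = X (k xᵢ)}` are uniformly c.e. unions of cylinders of measure `2⁻ⁿ`: flipping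
bit `xᵢ` leaves the earlier constraints intact and toggles the `i`-th one, so each constraint
halves the count of admissible strings. They form a Martin-Löf test containing `A`.
-/

open MeasureTheory

/-- `(U n)` is a Martin-Löf test w.r.t. `μ`: a uniformly c.e. sequence of open
sets (each `U n` is the union of the cylinders over a uniformly c.e. set of
strings) with `μ (U n) ≤ 2^{-n}`. -/
def MLTest (μ : Measure (ℕ → Bool)) (U : ℕ → Set (ℕ → Bool)) : Prop :=
  (∃ W : ℕ → List Bool → Prop,
      REPred (fun p : ℕ × List Bool => W p.1 p.2) ∧
      ∀ n, U n = ⋃ σ ∈ {σ | W n σ}, cylinder σ) ∧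
  ∀ n, μ (U n) ≤ (1 / 2 : ENNReal) ^ n

/-- `A` is Martin-Löf random (w.r.t. `μ`) if it avoids every Martin-Löf test. -/
def MLRandom (μ : Measure (ℕ → Bool)) (A : ℕ → Bool) : Prop :=
  ∀ U : ℕ → Set (ℕ → Bool), MLTest μ U → A ∉ ⋂ n, U n

theorem ComputablePred.forall_lt {α : Type*} [Primcodable α] {p : α → ℕ → Prop}
    [DecidableRel p] (hp : ComputablePred fun x : α × ℕ => p x.1 x.2) :
    ComputablePred fun x : α × ℕ => ∀ i < x.2, p x.1 i := by
  refine Computable.computablePred ?_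
  have hrec := Computable.nat_rec (f := Prod.snd) (g := fun _ : α × ℕ => true)
    (h := fun (x : α × ℕ) (y : ℕ × Bool) => y.2 && decide (p x.1 y.1))
    Computable.snd (Computable.const true)
    (Primrec.and.to_comp.comp (Computable.snd.comp Computable.snd)
      (hp.decide.comp (Computable.pair (Computable.fst.comp Computable.fst)
        (Computable.fst.comp Computable.snd)))).to₂
  refine hrec.of_eq fun ⟨a, n⟩ => ?_
  induction n with
  | zero => simp
  | succ n ih => simp only [ih, Nat.forall_lt_succ_right, Bool.decide_and]

theorem List.getD_ofFn {α : Type*} {L : ℕ} (v : Fin L → α) (d : α) (j : ℕ) :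
    (List.ofFn v).getD j d = if h : j < L then v ⟨j, h⟩ else d := by
  split_ifs with h
  · simp [h]
  · simp [not_lt.1 h]

theorem List.getD_ofFn_update {α : Type*} {L : ℕ} (v : Fin L → α) (c : Fin L)
    (x d : α) (j : ℕ) :
    (List.ofFn (Function.update v c x)).getD j d =
      if j = c then x else (List.ofFn v).getD j d := by
  by_cases hj : j = c
  · simp [hj]
  · simp only [List.getD_ofFn, hj, if_false]
    split_ifs with h
    · exact Function.update_of_ne (fun h' => hj (by rw [← h'])) _ _
    · rfl

theorem ofFn_eq_of_mem_cylinder {X : ℕ → Bool} {σ : List Bool} {L : ℕ} (hX : X ∈ cylinder σ)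
    (hσ : σ.length = L) : List.ofFn (fun j : Fin L => X j) = σ := by
  subst hσ
  exact List.ext_getElem (by simp) fun j _ hj => by simpa [List.getD_eq_getElem, hj] using hX j hj

theorem mem_cylinder_ofFn_s14 (X : ℕ → Bool) (L : ℕ) :
    X ∈ cylinder (List.ofFn fun j : Fin L => X j) := fun j hj => by
  simp only [List.length_ofFn] at hj
  simp [hj]

theorem measure_biUnion_cylinder_ofFn_le {μ : Measure (ℕ → Bool)} (hμ : IsFairCoin μ) {L : ℕ}
    (S : Finset (Fin L → Bool)) :
    μ (⋃ v ∈ S, cylinder (List.ofFn v)) ≤ S.card * (1 / 2 : ENNReal) ^ L :=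
  calc μ (⋃ v ∈ S, cylinder (List.ofFn v)) ≤ ∑ v ∈ S, μ (cylinder (List.ofFn v)) :=
        measure_biUnion_finset_le _ _
    _ = S.card * (1 / 2 : ENNReal) ^ L := by
        simp only [fun v => hμ (List.ofFn v), List.length_ofFn, Finset.sum_const, nsmul_eq_mul]

theorem Finset.card_filter_mul_two {α : Type*} {s : Finset α} {p : α → Prop} [DecidablePred p]
    {f : α → α} (hf : Function.Involutive f) (hs : ∀ x ∈ s, f x ∈ s)
    (hp : ∀ x, p (f x) ↔ ¬ p x) :
    (s.filter p).card * 2 = s.card := by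
  have hflip : (s.filter p).card = (s.filter fun x => ¬ p x).card :=
    Finset.card_nbij' f f (fun x hx => by simp_all) (fun x hx => by simp_all [← hp])
      (fun x _ => hf x) (fun x _ => hf x)
  rw [mul_two]
  nth_rewrite 2 [hflip]
  exact Finset.card_filter_add_card_filter_not p

def agreeingStrings (L n : ℕ) (a b : ℕ → ℕ) : Finset (Fin L → Bool) :=
  Finset.univ.filter fun v =>
    ∀ i < n, (List.ofFn v).getD (a i) false = (List.ofFn v).getD (b i) false

theorem card_agreeingStrings_mul_pow {L n : ℕ} {a b : ℕ → ℕ} (hab : ∀ i < n, a i ≠ b i)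
    (hfresh : ∀ i < n, ∀ j < i, a i ≠ a j ∧ a i ≠ b j) (hL : ∀ i < n, a i < L) :
    (agreeingStrings L n a b).card * 2 ^ n = 2 ^ L := by
  induction n with
  | zero => simp [agreeingStrings]
  | succ n ih =>
    have hsucc : agreeingStrings L (n + 1) a b = (agreeingStrings L n a b).filter fun v =>
        (List.ofFn v).getD (a n) false = (List.ofFn v).getD (b n) false := by
      simp only [agreeingStrings, Finset.filter_filter, Nat.forall_lt_succ_right]
    let c : Fin L := ⟨a n, hL n n.lt_succ_self⟩
    have hflip := Finset.card_filter_mul_two (s := agreeingStrings L n a b)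
      (p := fun v => (List.ofFn v).getD (a n) false = (List.ofFn v).getD (b n) false)
      (f := fun v => Function.update v c (!v c)) (fun v => by simp)
      (fun v hv => by
        simp only [agreeingStrings, Finset.mem_filter, Finset.mem_univ, true_and] at hv ⊢
        intro i hi
        have := hfresh n n.lt_succ_self i hi
        simp only [List.getD_ofFn_update, c, Ne.symm this.1, Ne.symm this.2, if_false]
        exact hv i hi)
      (fun v => by
        have hvc : (List.ofFn v).getD (a n) false = v c := by
          rw [List.getD_ofFn, dif_pos c.isLt]
        simp only [List.getD_ofFn_update, c, (hab n n.lt_succ_self).symm, if_true, if_false]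
        rw [hvc]
        cases v c <;> cases (List.ofFn v).getD (b n) false <;> decide)
    rw [hsucc, pow_succ', ← mul_assoc, hflip]
    exact ih (fun i hi => hab i (hi.trans n.lt_succ_self))
      (fun i hi => hfresh i (hi.trans n.lt_succ_self)) (fun i hi => hL i (hi.trans n.lt_succ_self))

section MovedPoints

variable (k : ℕ → ℕ) (hinf : ∀ B, ∃ x, B ≤ x ∧ k x ≠ x)

noncomputable def nextMoved (B : ℕ) : ℕ := Nat.find (hinf B)

noncomputable def movedBound : ℕ → ℕ
  | 0 => 0
  | i + 1 => max (nextMoved k hinf (movedBound i)) (k (nextMoved k hinf (movedBound i))) + 1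

noncomputable def movedPoint (i : ℕ) : ℕ := nextMoved k hinf (movedBound k hinf i)

theorem movedBound_le_movedPoint (i : ℕ) : movedBound k hinf i ≤ movedPoint k hinf i :=
  (Nat.find_spec (hinf _)).1

theorem k_movedPoint_ne (i : ℕ) : k (movedPoint k hinf i) ≠ movedPoint k hinf i :=
  (Nat.find_spec (hinf _)).2

theorem movedBound_succ (i : ℕ) :
    movedBound k hinf (i + 1) = max (movedPoint k hinf i) (k (movedPoint k hinf i)) + 1 := rfl

theorem movedBound_mono : Monotone (movedBound k hinf) :=
  monotone_nat_of_le_succ fun i => by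
    rw [movedBound_succ]
    exact (movedBound_le_movedPoint k hinf i).trans (le_max_left _ _) |>.trans (Nat.le_succ _)

theorem movedPoint_lt_movedBound {i n : ℕ} (h : i < n) :
    movedPoint k hinf i < movedBound k hinf n ∧ k (movedPoint k hinf i) < movedBound k hinf n := by
  have := movedBound_mono k hinf (Nat.succ_le_of_lt h)
  rw [movedBound_succ] at this
  omega

theorem computable_nextMoved (hk : Computable k) : Computable (nextMoved k hinf) := by
  refine Computable.find ?_ hinf
  refine Computable.computablePred ?_
  have hle : Computable fun p : ℕ × ℕ => decide (p.1 ≤ p.2) := Primrec.nat_le.decide.to_comp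
  have hne : Computable fun p : ℕ × ℕ => !decide (k p.2 = p.2) :=
    Primrec.not.to_comp.comp <|
      Primrec.eq.decide.to_comp.comp (hk.comp Computable.snd) Computable.snd
  exact (Primrec.and.to_comp.comp hle hne).of_eq fun p => by simp

theorem computable_movedBound (hk : Computable k) : Computable (movedBound k hinf) := by
  have hnext := computable_nextMoved k hinf hk
  have hstep : Computable fun B => max (nextMoved k hinf B) (k (nextMoved k hinf B)) + 1 :=
    Computable.succ.comp (Primrec.nat_max.to_comp.comp hnext (hk.comp hnext))
  refine (Computable.nat_rec Computable.id (Computable.const 0)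
    (hstep.comp (Computable.snd.comp Computable.snd)).to₂).of_eq fun i => ?_
  induction i with
  | zero => rfl
  | succ i ih => dsimp only [id] at ih ⊢; rw [ih, movedBound]

theorem computable_movedPoint (hk : Computable k) : Computable (movedPoint k hinf) :=
  (computable_nextMoved k hinf hk).comp (computable_movedBound k hinf hk)

def AgreesOnMoved (n : ℕ) (σ : List Bool) : Prop :=
  σ.length = movedBound k hinf n ∧
    ∀ i < n, σ.getD (movedPoint k hinf i) false = σ.getD (k (movedPoint k hinf i)) false

def agreementTest (n : ℕ) : Set (ℕ → Bool) :=
  ⋃ σ ∈ {σ | AgreesOnMoved k hinf n σ}, cylinder σ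

theorem computablePred_agreesOnMoved (hk : Computable k) :
    ComputablePred fun p : ℕ × List Bool => AgreesOnMoved k hinf p.1 p.2 := by
  have hpt := computable_movedPoint k hinf hk
  have hgetD : Computable₂ fun (σ : List Bool) (j : ℕ) => σ.getD j false :=
    (Primrec.list_getD false).to_comp
  have hlen : Computable fun p : ℕ × List Bool => decide (p.2.length = movedBound k hinf p.1) :=
    Primrec.eq.decide.to_comp.comp (Computable.list_length.comp Computable.snd)
      ((computable_movedBound k hinf hk).comp Computable.fst)
  have hagree : ComputablePred fun x : List Bool × ℕ => ∀ i < x.2,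
      x.1.getD (movedPoint k hinf i) false = x.1.getD (k (movedPoint k hinf i)) false :=
    ComputablePred.forall_lt (p := fun (σ : List Bool) i =>
        σ.getD (movedPoint k hinf i) false = σ.getD (k (movedPoint k hinf i)) false) <|
      Computable.computablePred <|
      Primrec.eq.decide.to_comp.comp (hgetD.comp Computable.fst (hpt.comp Computable.snd))
        (hgetD.comp Computable.fst (hk.comp (hpt.comp Computable.snd)))
  have hand : ComputablePred fun p : ℕ × List Bool => p.2.length = movedBound k hinf p.1 ∧
      ∀ i < p.1, p.2.getD (movedPoint k hinf i) false = p.2.getD (k (movedPoint k hinf i)) false :=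
    Computable.computablePred <| (Primrec.and.to_comp.comp hlen
      (hagree.decide.comp (Computable.pair Computable.snd Computable.fst))).of_eq fun p => by simp
  exact hand.of_eq fun _ => Iff.rfl

theorem agreementTest_subset (n : ℕ) :
    agreementTest k hinf n ⊆ ⋃ v ∈ agreeingStrings (movedBound k hinf n) n (movedPoint k hinf)
      (k ∘ movedPoint k hinf), cylinder (List.ofFn v) := by
  intro X hX
  simp only [agreementTest, Set.mem_iUnion] at hX
  obtain ⟨σ, ⟨hlen, hagree⟩, hXσ⟩ := hX
  have hσ := ofFn_eq_of_mem_cylinder hXσ hlen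
  refine Set.mem_iUnion₂.2 ⟨fun j => X j, ?_, by rwa [hσ]⟩
  simpa only [agreeingStrings, Finset.mem_filter, Finset.mem_univ, true_and, hσ,
    Function.comp_apply] using hagree

theorem measure_agreementTest_le {μ : Measure (ℕ → Bool)} (hμ : IsFairCoin μ) (n : ℕ) :
    μ (agreementTest k hinf n) ≤ (1 / 2 : ENNReal) ^ n := by
  set S := agreeingStrings (movedBound k hinf n) n (movedPoint k hinf) (k ∘ movedPoint k hinf)
  have hcard : (S.card : ENNReal) * 2 ^ n = 2 ^ movedBound k hinf n := by
    refine mod_cast card_agreeingStrings_mul_pow (fun i _ => (k_movedPoint_ne k hinf i).symm)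
      (fun i _ j hj => ?_) (fun i hi => (movedPoint_lt_movedBound k hinf hi).1)
    have := movedPoint_lt_movedBound k hinf hj
    have := movedBound_le_movedPoint k hinf i
    exact ⟨by omega, by simp only [Function.comp_apply]; omega⟩
  calc μ (agreementTest k hinf n) ≤ μ (⋃ v ∈ S, cylinder (List.ofFn v)) :=
        measure_mono (agreementTest_subset k hinf n)
    _ ≤ S.card * (1 / 2 : ENNReal) ^ movedBound k hinf n := measure_biUnion_cylinder_ofFn_le hμ S
    _ = (1 / 2 : ENNReal) ^ n := by
      rw [one_div, ← ENNReal.inv_pow (a := 2) (n := n)]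
      refine ENNReal.eq_inv_of_mul_eq_one_left ?_
      rw [mul_right_comm, hcard, ← mul_pow, ENNReal.mul_inv_cancel two_ne_zero ENNReal.ofNat_ne_top,
        one_pow]

theorem mlTest_agreementTest (hk : Computable k) {μ : Measure (ℕ → Bool)} (hμ : IsFairCoin μ) :
    MLTest μ (agreementTest k hinf) :=
  ⟨⟨_, (computablePred_agreesOnMoved k hinf hk).to_re, fun _ => rfl⟩,
    measure_agreementTest_le k hinf hμ⟩

theorem mem_agreementTest {A : ℕ → Bool} (hA : ∀ x, A x = A (k x)) (n : ℕ) :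
    A ∈ agreementTest k hinf n := by
  simp only [agreementTest, Set.mem_iUnion]
  refine ⟨_, ⟨List.length_ofFn, fun i hi => ?_⟩, mem_cylinder_ofFn_s14 A (movedBound k hinf n)⟩
  obtain ⟨hx, hkx⟩ := movedPoint_lt_movedBound k hinf hi
  rw [List.getD_ofFn, List.getD_ofFn, dif_pos hx, dif_pos hkx]
  exact hA _

end MovedPoints

/-- Every Martin-Löf random set is m-rigid. -/
theorem stmt_14 (μ : Measure (ℕ → Bool)) (hμ : IsFairCoin μ)
    (A : ℕ → Bool) (hA : MLRandom μ A) : MRigid A := by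
  intro k hk hAk
  by_contra hfin
  have hinf : ∀ B, ∃ x, B ≤ x ∧ k x ≠ x := fun B =>
    let ⟨x, hx, hBx⟩ := Set.Infinite.exists_gt hfin B
    ⟨x, hBx.le, hx⟩
  exact hA _ (mlTest_agreementTest k hinf hk hμ)
    (Set.mem_iInter.2 (mem_agreementTest k hinf hAk))
end
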